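/- arXiv:0908.0596 — 4 statements merged into one kernel-verified Lean document; each statement's English description precedes it below -/
import Mathlib

section
/- The probability measure ν on Λ_A defined by ν(Λ_{k,A}(a)) = r(A)^{−k} p_{a_k} (with p the normalized Perron–Frobenius eigenvector of A) satisfies the self-similarity relation ν = r(A)^{−1} Σ_{j=0}^{N−1} ν∘σ_j^{−1}, where σ_j^{−1}(E) = {x ∈ Λ_A : x ∈ D_j and σ_j(x) ∈ E}. -/
open MeasureTheory
open scoped BigOperators ENNReal

/-- Prepending a letter to a one-sided infinite word (the map `σ_j(w) = jw`). -/
def prepend {N : ℕ} (j : Fin N) (w : ℕ → Fin N) : ℕ → Fin N :=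
  fun n => match n with
  | 0 => j
  | Nat.succ m => w m

lemma measurable_prepend {N : ℕ} (j : Fin N) : Measurable (prepend j) := by
  apply measurable_pi_lambda
  intro n
  cases n with
  | zero => exact measurable_const
  | succ m => exact measurable_pi_apply m

def Zcyl {N : ℕ} (n : ℕ) (b : ℕ → Fin N) : Set (ℕ → Fin N) := {w | ∀ i, i < n → w i = b i}

lemma measurableSet_Zcyl {N n : ℕ} {b : ℕ → Fin N} : MeasurableSet (Zcyl n b) := by
  have h : Zcyl n b = ⋂ i ∈ Finset.range n, (fun w : ℕ → Fin N => w i) ⁻¹' {b i} := by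
    ext w; simp [Zcyl]
  rw [h]
  exact MeasurableSet.biInter (Set.to_countable _)
    (fun i _ => (measurable_pi_apply i) (measurableSet_singleton _))

lemma measurableSet_Lambda {N : ℕ} (A : Matrix (Fin N) (Fin N) ℝ) :
    MeasurableSet {w : ℕ → Fin N | ∀ n, A (w n) (w (n + 1)) = 1} := by
  have h : {w : ℕ → Fin N | ∀ n, A (w n) (w (n + 1)) = 1}
      = ⋂ n, (fun w : ℕ → Fin N => (w n, w (n + 1))) ⁻¹' {q : Fin N × Fin N | A q.1 q.2 = 1} := by
    ext w; simp
  rw [h]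
  refine MeasurableSet.iInter fun n => ?_
  have hm : Measurable fun w : ℕ → Fin N => (w n, w (n + 1)) :=
    (measurable_pi_apply n).prodMk (measurable_pi_apply (n + 1))
  exact hm ((Set.toFinite _).measurableSet)


/-- The measure `ν` on `Λ_A` with cylinder values
`ν(Λ_{k,A}(a)) = r(A)^{-k} p_{a_k}` (for `p` the normalized Perron–Frobenius eigenvector
of the irreducible 0-1 matrix `A`) satisfies the self-similarity relation
`ν = r(A)^{-1} Σ_{j} ν ∘ σ_j^{-1}`, where
`σ_j^{-1}(E) = {x ∈ Λ_A : x ∈ D_j and σ_j(x) ∈ E}`. -/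
theorem cylinder_measure_self_similarity
    {N : ℕ} (hN : 0 < N) (A : Matrix (Fin N) (Fin N) ℝ)
    (hA01 : ∀ i j, A i j = 0 ∨ A i j = 1)
    (hirr : ∃ n : ℕ, ∀ i j, 0 < (A ^ n) i j)
    (r : ℝ) (hr : 0 < r) (p : Fin N → ℝ)
    (hp : ∀ i, 0 ≤ p i) (hpsum : ∑ i, p i = 1)
    (heig : ∀ i, ∑ j, A i j * p j = r * p i)
    (Λ : Set (ℕ → Fin N)) (hΛ : Λ = {w | ∀ n, A (w n) (w (n + 1)) = 1})
    (ν : Measure (ℕ → Fin N)) [IsFiniteMeasure ν]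
    (hν0 : ν Λᶜ = 0)
    (hν : ∀ (k : ℕ) (a : Fin (k + 1) → Fin N),
        (∀ i : Fin k, A (a i.castSucc) (a i.succ) = 1) →
        ν ({w | ∀ i : Fin (k + 1), w i = a i} ∩ Λ)
          = ENNReal.ofReal (p (a (Fin.last k)) / r ^ (k + 1))) :
    ∀ E : Set (ℕ → Fin N), MeasurableSet E →
      ν E = (ENNReal.ofReal r)⁻¹ *
        ∑ j, ν {x | x ∈ Λ ∧ A j (x 0) = 1 ∧ prepend j x ∈ E} := by
  classical
  have hFinNe : Nonempty (Fin N) := ⟨⟨0, hN⟩⟩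
  have hmΛ : MeasurableSet Λ := hΛ ▸ measurableSet_Lambda A
  have hΛmem : ∀ w, w ∈ Λ ↔ ∀ n, A (w n) (w (n + 1)) = 1 := fun w => by rw [hΛ]; exact Iff.rfl
  have hmS : ∀ j : Fin N, MeasurableSet (Λ ∩ {x : ℕ → Fin N | A j (x 0) = 1}) := by
    intro j
    have h : {x : ℕ → Fin N | A j (x 0) = 1} = (fun x : ℕ → Fin N => x 0) ⁻¹' {c | A j c = 1} := rfl
    rw [h]
    exact hmΛ.inter ((measurable_pi_apply 0) ((Set.toFinite _).measurableSet))
  have hsetRHS : ∀ (j : Fin N) (E : Set (ℕ → Fin N)),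
      {x | x ∈ Λ ∧ A j (x 0) = 1 ∧ prepend j x ∈ E}
        = prepend j ⁻¹' E ∩ (Λ ∩ {x | A j (x 0) = 1}) := by
    intro j E; ext x
    simp only [Set.mem_setOf_eq, Set.mem_inter_iff, Set.mem_preimage]
    tauto
  -- drop to Λ
  have drop : ∀ s : Set (ℕ → Fin N), ν s = ν (s ∩ Λ) := by
    intro s
    have h2 : ν (s \ Λ) = 0 := measure_mono_null (fun x hx => hx.2) hν0
    rw [← measure_inter_add_diff s hmΛ, h2, add_zero]
  -- the key cylinder values
  have key : ∀ (n : ℕ) (b : ℕ → Fin N),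
      ν (Zcyl (n + 1) b ∩ Λ)
        = if ∀ i, i + 1 < n + 1 → A (b i) (b (i + 1)) = 1
          then ENNReal.ofReal (p (b n) / r ^ (n + 1)) else 0 := by
    intro n b
    by_cases hadm : ∀ i, i + 1 < n + 1 → A (b i) (b (i + 1)) = 1
    · rw [if_pos hadm]
      have h := hν n (fun i : Fin (n + 1) => b i)
        (fun i => by simpa using hadm i.val (by omega))
      have hset : {w : ℕ → Fin N | ∀ i : Fin (n + 1), w i = b i} = Zcyl (n + 1) b := by
        ext w; simp [Zcyl, Fin.forall_iff]
      rw [hset] at h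
      simpa using h
    · rw [if_neg hadm]
      push_neg at hadm
      obtain ⟨i, hi, hAi⟩ := hadm
      have hempty : Zcyl (n + 1) b ∩ Λ = ∅ := by
        ext w
        simp only [Set.mem_inter_iff, Set.mem_empty_iff_false, iff_false, not_and]
        intro hw hwΛ
        have h1 : w i = b i := hw i (by omega)
        have h2 : w (i + 1) = b (i + 1) := hw (i + 1) hi
        have := (hΛmem w).mp hwΛ i
        rw [h1, h2] at this
        exact hAi this
      rw [hempty, measure_empty]
  -- base computation : ν (Λ ∩ {A j x0 = 1}) = p j
  have base : ∀ j : Fin N, ν (Λ ∩ {x : ℕ → Fin N | A j (x 0) = 1}) = ENNReal.ofReal (p j) := by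
    intro j
    have hdecomp : Λ ∩ {x : ℕ → Fin N | A j (x 0) = 1}
        = ⋃ c ∈ Finset.univ.filter (fun c : Fin N => A j c = 1),
            (Zcyl 1 (fun _ => c) ∩ Λ) := by
      ext x
      simp only [Set.mem_inter_iff, Set.mem_setOf_eq, Set.mem_iUnion, Finset.mem_filter,
        Finset.mem_univ, true_and, Zcyl]
      constructor
      · rintro ⟨hxΛ, hx0⟩
        refine ⟨x 0, hx0, fun i hi => ?_, hxΛ⟩
        have hi0 : i = 0 := by omega
        subst hi0
        rfl
      · rintro ⟨c, hc, hx, hxΛ⟩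
        refine ⟨hxΛ, ?_⟩
        rw [hx 0 (by omega)]
        exact hc
    have hdisj : (↑(Finset.univ.filter (fun c : Fin N => A j c = 1)) : Set (Fin N)).PairwiseDisjoint
        (fun c => Zcyl 1 (fun _ => c) ∩ Λ) := by
      intro c _ c' _ hne
      refine Set.disjoint_left.mpr ?_
      rintro x ⟨hx, _⟩ ⟨hx', _⟩
      exact hne ((hx 0 (by omega)).symm.trans (hx' 0 (by omega)))
    rw [hdecomp, measure_biUnion_finset hdisj (fun c _ => measurableSet_Zcyl.inter hmΛ)]
    have hterm : ∀ c : Fin N, ν (Zcyl 1 (fun _ => c) ∩ Λ) = ENNReal.ofReal (p c / r) := by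
      intro c
      have := key 0 (fun _ => c)
      rw [if_pos (by intro i hi; omega)] at this
      simpa using this
    calc ∑ c ∈ Finset.univ.filter (fun c : Fin N => A j c = 1), ν (Zcyl 1 (fun _ => c) ∩ Λ)
        = ∑ c ∈ Finset.univ.filter (fun c : Fin N => A j c = 1), ENNReal.ofReal (p c / r) := by
          exact Finset.sum_congr rfl fun c _ => hterm c
      _ = ENNReal.ofReal (∑ c ∈ Finset.univ.filter (fun c : Fin N => A j c = 1), p c / r) := by
          rw [ENNReal.ofReal_sum_of_nonneg]
          intro c _
          exact div_nonneg (hp c) hr.le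
      _ = ENNReal.ofReal (p j) := by
          congr 1
          rw [Finset.sum_filter]
          have h1 : ∀ c : Fin N, (if A j c = 1 then p c / r else 0) = A j c * p c / r := by
            intro c
            rcases hA01 j c with h | h <;> simp [h]
          simp_rw [h1]
          rw [← Finset.sum_div, heig j]
          field_simp
  -- main cylinder self-similarity
  have arith : ∀ (x : ℝ) (k : ℕ),
      ENNReal.ofReal (x / r ^ (k + 1)) = (ENNReal.ofReal r)⁻¹ * ENNReal.ofReal (x / r ^ k) := by
    intro x k
    have h : x / r ^ (k + 1) = (x / r ^ k) / r := by
      rw [pow_succ, ← div_div]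
    rw [h, ENNReal.ofReal_div_of_pos hr, ENNReal.div_eq_inv_mul]
  have main : ∀ (n : ℕ) (b : ℕ → Fin N),
      ν (Zcyl (n + 1) b) = (ENNReal.ofReal r)⁻¹ *
        ∑ j, ν {x | x ∈ Λ ∧ A j (x 0) = 1 ∧ prepend j x ∈ Zcyl (n + 1) b} := by
    intro n b
    have hrw : ∀ j : Fin N, {x | x ∈ Λ ∧ A j (x 0) = 1 ∧ prepend j x ∈ Zcyl (n + 1) b}
        = prepend j ⁻¹' Zcyl (n + 1) b ∩ (Λ ∩ {x | A j (x 0) = 1}) := fun j => hsetRHS j _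
    simp_rw [hrw]
    have hpre : ∀ j : Fin N, prepend j ⁻¹' Zcyl (n + 1) b
        = if j = b 0 then Zcyl n (fun i => b (i + 1)) else ∅ := by
      intro j
      ext x
      simp only [Set.mem_preimage, Zcyl, Set.mem_setOf_eq]
      by_cases hj : j = b 0
      · subst hj
        rw [if_pos rfl]
        simp only [Zcyl, Set.mem_setOf_eq]
        constructor
        · intro h i hi
          have := h (i + 1) (by omega)
          simpa [prepend] using this
        · intro h i hi
          cases i with
          | zero => rfl
          | succ m =>
            have := h m (by omega)
            simpa [prepend] using this
      · rw [if_neg hj]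
        simp only [Set.mem_empty_iff_false, iff_false]
        intro h
        exact hj (h 0 (by omega))
    rw [Finset.sum_eq_single (b 0)]
    · rw [hpre (b 0), if_pos rfl]
      cases n with
      | zero =>
        have hz : Zcyl 0 (fun i : ℕ => b (i + 1)) = Set.univ := by
          ext x; simp [Zcyl]
        rw [hz, Set.univ_inter, base (b 0)]
        rw [drop, key 0 b, if_pos (by intro i hi; omega)]
        have h0 := arith (p (b 0)) 0
        simpa using h0
      | succ m =>
        by_cases hA1 : A (b 0) (b 1) = 1
        · have hset : Zcyl (m + 1) (fun i => b (i + 1)) ∩ (Λ ∩ {x | A (b 0) (x 0) = 1})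
              = Zcyl (m + 1) (fun i => b (i + 1)) ∩ Λ := by
            ext x
            simp only [Set.mem_inter_iff, Set.mem_setOf_eq, Zcyl]
            constructor
            · rintro ⟨h1, h2, _⟩; exact ⟨h1, h2⟩
            · rintro ⟨h1, h2⟩
              refine ⟨h1, h2, ?_⟩
              rw [h1 0 (by omega)]
              exact hA1
          rw [hset, key m (fun i => b (i + 1)), drop, key (m + 1) b]
          have hiff : (∀ i, i + 1 < m + 1 + 1 → A (b i) (b (i + 1)) = 1)
              ↔ (∀ i, i + 1 < m + 1 → A (b (i + 1)) (b (i + 1 + 1)) = 1) := by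
            constructor
            · intro h i hi; exact h (i + 1) (by omega)
            · intro h i hi
              cases i with
              | zero => exact hA1
              | succ k => exact h k (by omega)
          by_cases hadm : ∀ i, i + 1 < m + 1 + 1 → A (b i) (b (i + 1)) = 1
          · rw [if_pos hadm, if_pos (hiff.mp hadm), arith]
          · rw [if_neg hadm, if_neg (fun h => hadm (hiff.mpr h)), mul_zero]
        · have hset : Zcyl (m + 1) (fun i => b (i + 1)) ∩ (Λ ∩ {x | A (b 0) (x 0) = 1}) = ∅ := by
            ext x
            simp only [Set.mem_inter_iff, Set.mem_setOf_eq, Zcyl, Set.mem_empty_iff_false,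
              iff_false, not_and]
            intro h1 _ hx0
            rw [h1 0 (by omega)] at hx0
            exact hA1 hx0
          rw [hset, measure_empty, mul_zero, drop, key (m + 1) b, if_neg]
          intro h
          exact hA1 (h 0 (by omega))
    · intro j _ hj
      rw [hpre j, if_neg hj, Set.empty_inter, measure_empty]
    · intro h
      exact absurd (Finset.mem_univ _) h
  -- the RHS measure
  set μ : Measure (ℕ → Fin N) :=
      (ENNReal.ofReal r)⁻¹ •
        ∑ j, (ν.restrict (Λ ∩ {x | A j (x 0) = 1})).map (prepend j) with hμdef
  have hμapp : ∀ E : Set (ℕ → Fin N), MeasurableSet E →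
      μ E = (ENNReal.ofReal r)⁻¹ * ∑ j, ν {x | x ∈ Λ ∧ A j (x 0) = 1 ∧ prepend j x ∈ E} := by
    intro E hE
    rw [hμdef]
    rw [Measure.smul_apply, Measure.finset_sum_apply]
    congr 1
    refine Finset.sum_congr rfl fun j _ => ?_
    rw [Measure.map_apply (measurable_prepend j) hE,
      Measure.restrict_apply ((measurable_prepend j) hE), hsetRHS]
  have hμfin : IsFiniteMeasure μ := by
    constructor
    rw [hμapp Set.univ MeasurableSet.univ]
    refine ENNReal.mul_lt_top ?_ ?_
    · simp [ENNReal.inv_lt_top, ENNReal.ofReal_pos, hr]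
    · exact (ENNReal.sum_lt_top.mpr fun j _ => measure_lt_top ν _)
  -- equality on measurable cylinders
  -- ν and μ agree on exact cylinders of positive length
  have hZeq : ∀ (n : ℕ) (b : ℕ → Fin N), ν (Zcyl (n + 1) b) = μ (Zcyl (n + 1) b) := by
    intro n b
    rw [main n b, hμapp _ measurableSet_Zcyl]
  have cylEq : ∀ s ∈ measurableCylinders (fun _ : ℕ => Fin N), ν s = μ s := by
    intro s hs
    obtain ⟨t, S, hSm, rfl⟩ := (mem_measurableCylinders s).mp hs
    set n : ℕ := t.sup id + 1 with hn
    have htlt : ∀ i ∈ t, i < n := fun i hi => Nat.lt_succ_of_le (Finset.le_sup (f := id) hi)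
    have hnpos : 0 < n := Nat.succ_pos _
    -- extension of a finite word
    set ext : (Fin n → Fin N) → (ℕ → Fin N) :=
      fun a i => if h : i < n then a ⟨i, h⟩ else a ⟨0, hnpos⟩ with hext
    -- dependence on first n coordinates
    have hdep : ∀ w w' : ℕ → Fin N, (∀ i, i < n → w i = w' i) →
        (w ∈ cylinder t S ↔ w' ∈ cylinder t S) := by
      intro w w' h
      have hres : t.restrict w = t.restrict w' := by
        funext i
        exact h i.1 (htlt i.1 i.2)
      simp only [mem_cylinder, hres]
    have hcover : cylinder t S
        = ⋃ a ∈ (Finset.univ : Finset (Fin n → Fin N)), (cylinder t S ∩ Zcyl n (ext a)) := by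
      ext w
      simp only [Set.mem_iUnion, Finset.mem_univ, Set.mem_inter_iff, exists_true_left,
        exists_prop, true_and]
      constructor
      · intro hw
        refine ⟨fun i : Fin n => w i, hw, fun i hi => ?_⟩
        simp only [hext]
        rw [dif_pos hi]
      · rintro ⟨a, hw, _⟩
        exact hw
    have hdisj : (↑(Finset.univ : Finset (Fin n → Fin N)) : Set (Fin n → Fin N)).PairwiseDisjoint
        (fun a => cylinder t S ∩ Zcyl n (ext a)) := by
      intro a _ a' _ hne
      refine Set.disjoint_left.mpr ?_
      rintro x ⟨_, hx⟩ ⟨_, hx'⟩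
      apply hne
      funext i
      have h1 := hx i.1 i.2
      have h2 := hx' i.1 i.2
      simp only [hext] at h1 h2
      rw [dif_pos i.2] at h1 h2
      rw [← h1, ← h2]
    have hm : ∀ a : Fin n → Fin N, MeasurableSet (cylinder t S ∩ Zcyl n (ext a)) :=
      fun a => (MeasurableSet.cylinder t hSm).inter measurableSet_Zcyl
    rw [hcover, measure_biUnion_finset hdisj (fun a _ => hm a),
      measure_biUnion_finset hdisj (fun a _ => hm a)]
    refine Finset.sum_congr rfl fun a _ => ?_
    by_cases hmem : ext a ∈ cylinder t S
    · have heq : cylinder t S ∩ Zcyl n (ext a) = Zcyl n (ext a) := by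
        ext w
        simp only [Set.mem_inter_iff, and_iff_right_iff_imp]
        intro hw
        exact (hdep w (ext a) hw).mpr hmem
      rw [heq]
      obtain ⟨m, hm'⟩ : ∃ m, n = m + 1 := ⟨t.sup id, rfl⟩
      rw [hm']
      exact hZeq m (ext a)
    · have heq : cylinder t S ∩ Zcyl n (ext a) = ∅ := by
        ext w
        simp only [Set.mem_inter_iff, Set.mem_empty_iff_false, iff_false, not_and]
        intro hw hw'
        exact hmem ((hdep w (ext a) hw').mp hw)
      rw [heq, measure_empty, measure_empty]
  have huniv : ν Set.univ = μ Set.univ := by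
    exact cylEq _ (univ_mem_measurableCylinders _)
  have hext : ν = μ :=
    ext_of_generate_finite (measurableCylinders (fun _ : ℕ => Fin N))
      generateFrom_measurableCylinders.symm isPiSystem_measurableCylinders cylEq huniv
  intro E hE
  conv_lhs => rw [hext]
  exact hμapp E hE
end

section
/- Let μ_f be the measure on Λ_A ⊂ [0,1] given by μ_f(B) = ⟨f, E(B) f⟩ for f ∈ L²(Λ_A, μ_A) with ‖f‖ = 1, and let S_k be the Cuntz–Krieger generators acting on L²(Λ_A, μ_A). Then the Fourier transform μ̂_f(t) = ∫ e^{itx} dμ_f(x) satisfies the scaling identity μ̂_f(t) = Σ_{k=0}^{N−1} e^{itk/N} μ̂_{S_k* f}(t/N). -/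
open MeasureTheory Complex
open scoped ENNReal

/-!
Self-similarity says that `μ_A` is the sum of the push-forwards `N^{-δ} σ_k⁎(μ_A|_{D_k})`.
Integrating `|f|² e^{itx}` against this decomposition turns the left side into
`Σ_k N^{-δ} ∫_{D_k} |f ∘ σ_k|² e^{it σ_k x} dμ_A`, and the character factors as
`e^{it σ_k x} = e^{itk/N} e^{itx/N}`, leaving the densities of the measures `μ_{S_k* f}`.
-/

theorem Complex.exp_I_mul_mul_add_div (t x : ℝ) (k : ℕ) (N : ℝ) :
    exp (I * t * ((x + k) / N : ℝ)) = exp (I * t * k / N) * exp (I * t * x / N) := by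
  rw [← exp_add]
  congr 1
  push_cast
  ring

namespace MeasureTheory

variable {α : Type*} [MeasurableSpace α] {E : Type*} [NormedAddCommGroup E] [NormedSpace ℝ E]

theorem integral_withDensity_ofReal_eq_integral_smul {μ : Measure α} {ρ : α → ℝ}
    (hρ : Measurable ρ) (hρ_nonneg : ∀ x, 0 ≤ ρ x) (g : α → E) :
    ∫ x, g x ∂μ.withDensity (fun x => ENNReal.ofReal (ρ x)) = ∫ x, ρ x • g x ∂μ := by
  rw [integral_withDensity_eq_integral_toReal_smul hρ.ennreal_ofReal
    (ae_of_all _ fun _ => ENNReal.ofReal_lt_top)]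
  simp_rw [ENNReal.toReal_ofReal (hρ_nonneg _)]

theorem integral_withDensity_ofReal_const_mul_indicator_mul {μ : Measure α} {c : ℝ} (hc : 0 ≤ c)
    {D : Set α} (hD : MeasurableSet D) {ρ : α → ℝ} (hρ : Measurable ρ) (hρ_nonneg : ∀ x, 0 ≤ ρ x)
    (g : α → E) :
    ∫ x, g x ∂μ.withDensity (fun x => ENNReal.ofReal (c * D.indicator (fun _ => 1) x * ρ x))
      = c • ∫ x in D, ρ x • g x ∂μ := by
  have h_nonneg (x : α) : 0 ≤ c * D.indicator (fun _ => (1 : ℝ)) x * ρ x :=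
    mul_nonneg (mul_nonneg hc (Set.indicator_nonneg (fun _ _ => zero_le_one) x)) (hρ_nonneg x)
  rw [integral_withDensity_ofReal_eq_integral_smul (by fun_prop (disch := exact hD)) h_nonneg,
    ← integral_indicator hD, ← integral_smul]
  refine integral_congr_ae (ae_of_all _ fun x => ?_)
  by_cases hx : x ∈ D
  · simp [hx, mul_smul]
  · simp [hx]

variable {ι : Type*} [Fintype ι]

theorem Measure.eq_sum_smul_map_restrict {μ : Measure α} {w : ι → ℝ≥0∞} {σ : ι → α → α}
    {D : ι → Set α} (hσ : ∀ k, Measurable (σ k))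
    (h : ∀ s, MeasurableSet s → μ s = ∑ k, w k * μ {x | x ∈ D k ∧ σ k x ∈ s}) :
    μ = ∑ k, w k • (μ.restrict (D k)).map (σ k) := by
  ext s hs
  rw [h s hs, Measure.finsetSum_apply]
  refine Finset.sum_congr rfl fun k _ => ?_
  rw [Measure.smul_apply, smul_eq_mul, Measure.map_apply (hσ k) hs,
    Measure.restrict_apply (hσ k hs), Set.inter_comm]
  rfl

theorem integral_sum_smul_map_restrict {μ : Measure α} {w : ι → ℝ≥0∞} {σ : ι → α → α}
    {D : ι → Set α} (hσ : ∀ k, Measurable (σ k)) {g : α → E}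
    (hg : Integrable g (∑ k, w k • (μ.restrict (D k)).map (σ k)))
    (hg_meas : StronglyMeasurable g) :
    ∫ x, g x ∂(∑ k, w k • (μ.restrict (D k)).map (σ k))
      = ∑ k, (w k).toReal • ∫ x in D k, g (σ k x) ∂μ := by
  rw [integral_finsetSum_measure fun k _ =>
    hg.mono_measure (Finset.single_le_sum (fun _ _ => Measure.zero_le _) (Finset.mem_univ k))]
  simp_rw [integral_smul_measure, integral_map_of_stronglyMeasurable (hσ _) hg_meas]

end MeasureTheory

theorem fourier_scaling_identity_general
    {N : ℕ} (δ : ℝ)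
    (μA : Measure ℝ)
    (D : Fin N → Set ℝ) (hDmeas : ∀ k, MeasurableSet (D k))
    -- self-similarity of μ_A :  μ_A = N^{-δ_A} Σ_k μ_A ∘ σ_k^{-1}
    (hself : ∀ E : Set ℝ, MeasurableSet E →
      μA E = ∑ k : Fin N, ENNReal.ofReal ((N : ℝ) ^ (-δ)) *
        μA {x | x ∈ D k ∧ (x + (k : ℕ)) / (N : ℝ) ∈ E})
    (f : ℝ → ℂ) (hfmeas : Measurable f)
    (hfL2 : MemLp f 2 μA) :
    ∀ t : ℝ,
      (∫ x, Complex.exp (Complex.I * t * x)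
          ∂(μA.withDensity fun x => ENNReal.ofReal (‖f x‖ ^ 2)))
        = ∑ k : Fin N,
            Complex.exp (Complex.I * t * (k : ℕ) / (N : ℝ)) *
            ∫ x, Complex.exp (Complex.I * t * x / (N : ℝ))
              ∂(μA.withDensity fun x => ENNReal.ofReal
                  ((N : ℝ) ^ (-δ) * (D k).indicator (fun _ => (1 : ℝ)) x *
                    ‖f ((x + (k : ℕ)) / (N : ℝ))‖ ^ 2)) := by
  intro t
  have hc : 0 ≤ (N : ℝ) ^ (-δ) := by positivity
  have hσ (k : Fin N) : Measurable fun x : ℝ => (x + (k : ℕ)) / (N : ℝ) := by fun_prop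
  have hμA := Measure.eq_sum_smul_map_restrict hσ hself
  set g : ℝ → ℂ := fun x => ‖f x‖ ^ 2 • exp (I * t * x)
  have hg_meas : Measurable g := by fun_prop
  have hg : Integrable g μA :=
    (hfL2.integrable_norm_pow two_ne_zero).smul_bdd 1
      (Continuous.aestronglyMeasurable (by fun_prop))
      (ae_of_all _ fun _ => by simp [norm_exp])
  calc _ = ∫ x, g x ∂μA :=
        integral_withDensity_ofReal_eq_integral_smul (by fun_prop) (fun _ => by positivity) _
    _ = ∑ k : Fin N, (N : ℝ) ^ (-δ) • ∫ x in D k, g ((x + (k : ℕ)) / (N : ℝ)) ∂μA := by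
        conv_lhs => rw [hμA]
        rw [integral_sum_smul_map_restrict hσ (hμA ▸ hg) hg_meas.stronglyMeasurable]
        simp only [ENNReal.toReal_ofReal hc]
    _ = _ := by
        refine Finset.sum_congr rfl fun k _ => ?_
        rw [integral_withDensity_ofReal_const_mul_indicator_mul hc (hDmeas k)
          (ρ := fun x => ‖f ((x + (k : ℕ)) / (N : ℝ))‖ ^ 2) (by fun_prop) (fun _ => by positivity)]
        simp only [g, Complex.exp_I_mul_mul_add_div, ← mul_smul_comm, integral_const_mul]

/-- Let `μ_f(B) = ⟨f, E(B) f⟩ = ∫_B |f|² dμ_A` for `f ∈ L²(Λ_A, μ_A)`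
of norm one, in the representation of `O_A` on `L²(Λ_A, μ_A)` (so that
`μ_{S_k* f}(B) = ∫_B N^{-δ_A} χ_{D_k} |f ∘ σ_k|² dμ_A` with `σ_k(x) = (x+k)/N`).
Then the Fourier transform `μ̂_f(t) = ∫ e^{itx} dμ_f(x)` satisfies the scaling identity
`μ̂_f(t) = Σ_{k=0}^{N-1} e^{itk/N} μ̂_{S_k* f}(t/N)`. -/
theorem fourier_scaling_identity
    {N : ℕ} (hN : 2 ≤ N) (δ : ℝ) (hδ : 0 < δ)
    (μA : Measure ℝ) [IsProbabilityMeasure μA]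
    (Λ : Set ℝ) (hΛ : Λ ⊆ Set.Icc 0 1) (hμΛ : μA Λᶜ = 0)
    (D : Fin N → Set ℝ) (hDmeas : ∀ k, MeasurableSet (D k))
    -- self-similarity of μ_A :  μ_A = N^{-δ_A} Σ_k μ_A ∘ σ_k^{-1}
    (hself : ∀ E : Set ℝ, MeasurableSet E →
      μA E = ∑ k : Fin N, ENNReal.ofReal ((N : ℝ) ^ (-δ)) *
        μA {x | x ∈ D k ∧ (x + (k : ℕ)) / (N : ℝ) ∈ E})
    (f : ℝ → ℂ) (hfmeas : Measurable f)
    (hfL2 : MemLp f 2 μA) (hfnorm : ∫ x, ‖f x‖ ^ 2 ∂μA = 1) :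
    ∀ t : ℝ,
      (∫ x, Complex.exp (Complex.I * t * x)
          ∂(μA.withDensity fun x => ENNReal.ofReal (‖f x‖ ^ 2)))
        = ∑ k : Fin N,
            Complex.exp (Complex.I * t * (k : ℕ) / (N : ℝ)) *
            ∫ x, Complex.exp (Complex.I * t * x / (N : ℝ))
              ∂(μA.withDensity fun x => ENNReal.ofReal
                  ((N : ℝ) ^ (-δ) * (D k).indicator (fun _ => (1 : ℝ)) x *
                    ‖f ((x + (k : ℕ)) / (N : ℝ))‖ ^ 2)) :=
  fourier_scaling_identity_general δ μA D hDmeas hself f hfmeas hfL2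
end

section
/- The map Ξ : Λ_A → S_A given by Ξ(x) = (x, σ(x)), where σ is the shift on N-adic digits, is a well-defined continuous injection of the subshift Λ_A into the Sierpinski fractal S_A. -/
/-- The map `Ξ(x) = (x, σ(x))`, with `σ` the one-sided shift, is a
well-defined continuous injection of the subshift `Λ_A` into the Sierpinski fractal
`S_A` (the set of pairs of sequences `(x,y)` with `A_{x_i y_i} = 1` for all `i`). -/
theorem shift_graph_embedding_into_sierpinski
    {N : ℕ} (hN : 0 < N) (A : Fin N → Fin N → ℕ)
    (hA01 : ∀ i j, A i j = 0 ∨ A i j = 1)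
    (Λ : Set (ℕ → Fin N)) (hΛ : Λ = {w | ∀ n, A (w n) (w (n + 1)) = 1})
    (SA : Set ((ℕ → Fin N) × (ℕ → Fin N)))
    (hSA : SA = {p | ∀ n, A (p.1 n) (p.2 n) = 1})
    (Ξ : (ℕ → Fin N) → (ℕ → Fin N) × (ℕ → Fin N))
    (hΞ : Ξ = fun x => (x, fun n => x (n + 1))) :
    Set.MapsTo Ξ Λ SA ∧ Set.InjOn Ξ Λ ∧ ContinuousOn Ξ Λ := by
  subst hΛ hSA hΞ
  refine ⟨fun x hx n => hx n, fun x _ y _ h => congrArg Prod.fst h, ?_⟩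
  exact (continuous_id.prodMk (continuous_pi fun n => continuous_apply (n+1))).continuousOn
end

section
/- Suppose W : Λ_A → ℝ≥0 satisfies the Keane condition Σ_{j : A_{j x_1}=1} W(σ_j(x)) = 1 for all x. For x ∈ Λ_A define P^W_x on cylinders of Λ_{A^t} by P^W_x(Λ_{k,A^t}(a)) = A_{a_1 x_1} W(σ_{a_1}(x)) W(σ_{a_2}σ_{a_1}(x)) ⋯ W(σ_{a_k}⋯σ_{a_1}(x)) for a with a^t = (a_k,…,a_1) admissible for A. Then P^W_x is consistently defined: P^W_x(Λ_{k,A^t}(a)) = Σ_j (A^t)_{a_k j} P^W_x(Λ_{k+1,A^t}(aj)), and hence extends to a Borel measure on Λ_{A^t}. -/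
open MeasureTheory
open scoped BigOperators ENNReal

/-- The product `W(σ_{a_1}(x)) W(σ_{a_2}σ_{a_1}(x)) ⋯ W(σ_{a_k}⋯σ_{a_1}(x))` for a word
`a = [a_1,…,a_k]`. -/
def prodW {N : ℕ} (W : (ℕ → Fin N) → ℝ) : (ℕ → Fin N) → List (Fin N) → ℝ
  | _, [] => 1
  | x, j :: l => W (prepend j x) * prodW W (prepend j x) l

/-- The value `P^W_x(Λ_{k,A^t}(a)) = A_{a_1 x_1} W(σ_{a_1}(x)) ⋯ W(σ_{a_k}⋯σ_{a_1}(x))`. -/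
def PW {N : ℕ} (A : Fin N → Fin N → ℕ) (W : (ℕ → Fin N) → ℝ)
    (x : ℕ → Fin N) : List (Fin N) → ℝ
  | [] => 1
  | j :: l => (A j (x 0) : ℝ) * prodW W x (j :: l)

/-!
`P^W_x` is the law of the letters read by a random walk on `Λ_A`: from `y` it moves to
`σ_j(y)` with probability `A_{j y_0} W(σ_j y)`, a probability vector on `Λ_A` by the Keane
condition. The walk is built by Ionescu-Tulcea (`Kernel.trajMeasure`), so a cylinder has
probability the product of the transition probabilities along its word, which is
`P^W_x(Λ_{k,A^t}(a))` for admissible `a`. Since `A` is 0-1, a non-admissible word has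
probability zero, so the walk lives on `Λ_{A^t}`; consistency is the Keane condition at
`σ_{a_k}⋯σ_{a_1}(x)`.
-/

open ProbabilityTheory

variable {N : ℕ}

def shiftSpace (A : Fin N → Fin N → ℕ) : Set (ℕ → Fin N) := {w | ∀ n, A (w n) (w (n + 1)) = 1}

def prependWord (y : ℕ → Fin N) (a : List (Fin N)) : ℕ → Fin N :=
  a.foldl (fun w j => prepend j w) y

def transitionWeight (A : Fin N → Fin N → ℕ) (W : (ℕ → Fin N) → ℝ) (y : ℕ → Fin N)
    (j : Fin N) : ℝ :=
  A j (y 0) * W (prepend j y)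

def pathWeight (A : Fin N → Fin N → ℕ) (W : (ℕ → Fin N) → ℝ) :
    (ℕ → Fin N) → List (Fin N) → ℝ
  | _, [] => 1
  | y, j :: l => transitionWeight A W y j * pathWeight A W (prepend j y) l

section Words

variable {A : Fin N → Fin N → ℕ} {W : (ℕ → Fin N) → ℝ}

lemma prependWord_append_singleton (y : ℕ → Fin N) (l : List (Fin N)) (j : Fin N) :
    prependWord y (l ++ [j]) = prepend j (prependWord y l) := by
  simp [prependWord]

lemma prependWord_zero (y : ℕ → Fin N) {a : List (Fin N)} (ha : a ≠ []) :
    prependWord y a 0 = a.getLast ha := by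
  conv_lhs => rw [← List.dropLast_append_getLast ha, prependWord_append_singleton]
  rfl

lemma prodW_append_singleton (y : ℕ → Fin N) (l : List (Fin N)) (j : Fin N) :
    prodW W y (l ++ [j]) = prodW W y l * W (prepend j (prependWord y l)) := by
  induction l generalizing y with
  | nil => simp [prodW, prependWord]
  | cons k l ih => simp only [List.cons_append, prodW, ih, mul_assoc]; rfl

lemma PW_append_singleton (x : ℕ → Fin N) {a : List (Fin N)} (ha : a ≠ []) (j : Fin N) :
    PW A W x (a ++ [j]) = PW A W x a * W (prepend j (prependWord x a)) := by
  obtain ⟨k, l, rfl⟩ := List.exists_cons_of_ne_nil ha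
  simp only [List.cons_append, PW]
  rw [← List.cons_append, prodW_append_singleton, mul_assoc]

lemma pathWeight_append_singleton (y : ℕ → Fin N) (l : List (Fin N)) (j : Fin N) :
    pathWeight A W y (l ++ [j]) =
      pathWeight A W y l * transitionWeight A W (prependWord y l) j := by
  induction l generalizing y with
  | nil => simp [pathWeight, prependWord]
  | cons k l ih => simp only [List.cons_append, pathWeight, ih, mul_assoc]; rfl

lemma prodW_eq_pathWeight {z : ℕ → Fin N} {l : List (Fin N)}
    (h : (z 0 :: l).IsChain fun u v => A v u = 1) : prodW W z l = pathWeight A W z l := by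
  induction l generalizing z with
  | nil => rfl
  | cons k l ih =>
    rw [List.isChain_cons_cons] at h
    simp only [prodW, pathWeight, transitionWeight, h.1, Nat.cast_one, one_mul,
      ih (z := prepend k z) h.2]

lemma PW_eq_pathWeight (x : ℕ → Fin N) {a : List (Fin N)}
    (h : a.IsChain fun u v => A v u = 1) : PW A W x a = pathWeight A W x a := by
  cases a with
  | nil => rfl
  | cons j l =>
    simp only [PW, prodW, pathWeight, transitionWeight, prodW_eq_pathWeight (z := prepend j x) h,
      mul_assoc]

lemma pathWeight_nonneg (hW : ∀ y, 0 ≤ W y) (y : ℕ → Fin N) (a : List (Fin N)) :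
    0 ≤ pathWeight A W y a := by
  induction a generalizing y with
  | nil => exact zero_le_one
  | cons j l ih => exact mul_nonneg (mul_nonneg (Nat.cast_nonneg _) (hW _)) (ih _)

lemma eq_one_of_transitionWeight_ne_zero (hA01 : ∀ i j, A i j = 0 ∨ A i j = 1)
    {y : ℕ → Fin N} {j : Fin N} (h : transitionWeight A W y j ≠ 0) : A j (y 0) = 1 :=
  (hA01 j (y 0)).resolve_left fun h0 => h (by simp [transitionWeight, h0])

lemma prepend_mem_shiftSpace {y : ℕ → Fin N} (hy : y ∈ shiftSpace A) {j : Fin N}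
    (hj : A j (y 0) = 1) : prepend j y ∈ shiftSpace A
  | 0 => hj
  | n + 1 => hy n

lemma prependWord_mem_shiftSpace (hA01 : ∀ i j, A i j = 0 ∨ A i j = 1) {y : ℕ → Fin N}
    (hy : y ∈ shiftSpace A) {a : List (Fin N)} (h : pathWeight A W y a ≠ 0) :
    prependWord y a ∈ shiftSpace A := by
  induction a generalizing y with
  | nil => exact hy
  | cons j l ih =>
    obtain ⟨hj, hl⟩ := mul_ne_zero_iff.1 h
    exact ih (prepend_mem_shiftSpace hy (eq_one_of_transitionWeight_ne_zero hA01 hj)) hl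

lemma isChain_of_pathWeight_ne_zero (hA01 : ∀ i j, A i j = 0 ∨ A i j = 1) {y : ℕ → Fin N}
    {a : List (Fin N)} (h : pathWeight A W y a ≠ 0) : a.IsChain fun u v => A v u = 1 := by
  induction a generalizing y with
  | nil => exact .nil
  | cons j l ih =>
    obtain ⟨-, hl⟩ := mul_ne_zero_iff.1 h
    cases l with
    | nil => exact .singleton j
    | cons k l =>
      exact (ih hl).cons_cons (eq_one_of_transitionWeight_ne_zero hA01 (mul_ne_zero_iff.1 hl).1)

lemma PW_eq_sum_mul_PW_append_singleton (hA01 : ∀ i j, A i j = 0 ∨ A i j = 1)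
    (hKeane : ∀ y ∈ shiftSpace A, ∑ j, transitionWeight A W y j = 1) {x : ℕ → Fin N}
    (hx : x ∈ shiftSpace A) {a : List (Fin N)} (ha : a ≠ [])
    (hchain : a.IsChain fun u v => A v u = 1) :
    PW A W x a = ∑ j, (A j (a.getLast ha) : ℝ) * PW A W x (a ++ [j]) := by
  have hsum : ∑ j, (A j (a.getLast ha) : ℝ) * PW A W x (a ++ [j]) =
      PW A W x a * ∑ j, transitionWeight A W (prependWord x a) j := by
    rw [Finset.mul_sum]
    refine Finset.sum_congr rfl fun j _ => ?_
    rw [PW_append_singleton x ha, transitionWeight, prependWord_zero x ha]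
    ring
  rw [hsum]
  by_cases h : PW A W x a = 0
  · simp [h]
  · rw [PW_eq_pathWeight x hchain] at h
    rw [hKeane _ (prependWord_mem_shiftSpace hA01 hx h), mul_one]

end Words

section Walk

variable (A : Fin N → Fin N → ℕ) (W : (ℕ → Fin N) → ℝ)

/-- Off `Λ_A` the weights need not form a probability vector; there any Dirac mass will do. -/
noncomputable def stepMeasure (y : ℕ → Fin N) : Measure (Fin N) :=
  if h : ∑ j, ENNReal.ofReal (transitionWeight A W y j) = 1 then (PMF.ofFintype _ h).toMeasure
  else Measure.dirac (y 0)

instance (y : ℕ → Fin N) : IsProbabilityMeasure (stepMeasure A W y) := by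
  unfold stepMeasure; split <;> infer_instance

def historyWord {n : ℕ} (v : Π _ : Finset.Iic n, Fin N) : List (Fin N) :=
  List.ofFn fun i : Fin (n + 1) => v ⟨i, Finset.mem_Iic.2 (Nat.lt_succ_iff.1 i.2)⟩

noncomputable def stepKernel (x : ℕ → Fin N) (n : ℕ) :
    Kernel (Π _ : Finset.Iic n, Fin N) (Fin N) :=
  Kernel.ofFunOfCountable fun v => stepMeasure A W (prependWord x (historyWord v))

instance (x : ℕ → Fin N) (n : ℕ) : IsMarkovKernel (stepKernel A W x n) :=
  ⟨fun _ => inferInstanceAs (IsProbabilityMeasure (stepMeasure _ _ _))⟩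

noncomputable def walkMeasure (x : ℕ → Fin N) : Measure (ℕ → Fin N) :=
  Kernel.trajMeasure (stepMeasure A W x) (stepKernel A W x)

instance (x : ℕ → Fin N) : IsProbabilityMeasure (walkMeasure A W x) := by
  unfold walkMeasure; infer_instance

def wordCylinder (a : List (Fin N)) : Set (ℕ → Fin N) := {w | ∀ i : Fin a.length, w i = a.get i}

lemma mem_wordCylinder_iff {a : List (Fin N)} {w : ℕ → Fin N} :
    w ∈ wordCylinder a ↔ (List.range a.length).map w = a := by
  simp [wordCylinder, List.ext_getElem_iff, Fin.forall_iff]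

lemma historyWord_frestrictLe (w : ℕ → Fin N) (n : ℕ) :
    historyWord (Preorder.frestrictLe n w) = (List.range (n + 1)).map w := by
  apply List.ext_getElem <;> simp [historyWord, -List.ofFn_succ]

lemma wordCylinder_eq_preimage {b : List (Fin N)} {n : ℕ} (hb : b.length = n + 1) :
    wordCylinder b = Preorder.frestrictLe n ⁻¹' {v | historyWord v = b} := by
  ext w; simp [mem_wordCylinder_iff, historyWord_frestrictLe, hb]

lemma wordCylinder_append_singleton_eq_preimage {b : List (Fin N)} {n : ℕ}
    (hb : b.length = n + 1) (j : Fin N) :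
    wordCylinder (b ++ [j]) =
      (fun w => (Preorder.frestrictLe n w, w (n + 1))) ⁻¹' ({v | historyWord v = b} ×ˢ {j}) := by
  ext w
  simp [mem_wordCylinder_iff, historyWord_frestrictLe, hb, List.range_succ (n := n + 1),
    List.append_singleton_inj]

variable (x : ℕ → Fin N)

lemma walkMeasure_map_zero : (walkMeasure A W x).map (fun w => w 0) = stepMeasure A W x := by
  have heval : (fun w : ℕ → Fin N => w 0) =
      MeasurableEquiv.piUnique _ ∘ Preorder.frestrictLe 0 := rfl
  rw [heval, ← Measure.map_map (by fun_prop) (by fun_prop), walkMeasure, Kernel.trajMeasure,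
    Measure.map_comp _ _ (by fun_prop), Kernel.traj_map_frestrictLe, Kernel.partialTraj_self,
    Measure.id_comp, Measure.map_map (by fun_prop) (by fun_prop),
    MeasurableEquiv.self_comp_symm, Measure.map_id]

lemma walkMeasure_wordCylinder_singleton (j : Fin N) :
    walkMeasure A W x (wordCylinder [j]) = stepMeasure A W x {j} := by
  have hcyl : wordCylinder [j] = (fun w => w 0) ⁻¹' {j} := by
    ext w; simp [mem_wordCylinder_iff]
  rw [hcyl, ← Measure.map_apply (by fun_prop) (measurableSet_singleton j), walkMeasure_map_zero]

lemma walkMeasure_wordCylinder_append_singleton (b : List (Fin N)) (j : Fin N) :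
    walkMeasure A W x (wordCylinder (b ++ [j])) =
      walkMeasure A W x (wordCylinder b) * stepMeasure A W (prependWord x b) {j} := by
  obtain rfl | ⟨n, hb⟩ : b = [] ∨ ∃ n, b.length = n + 1 := by cases b <;> simp
  · rw [List.nil_append, walkMeasure_wordCylinder_singleton]
    simp [wordCylinder, prependWord]
  rw [wordCylinder_append_singleton_eq_preimage hb, ← Measure.map_apply (by fun_prop) .of_discrete,
    walkMeasure, ← Kernel.map_frestrictLe_trajMeasure_compProd_eq_map_trajMeasure,
    Measure.compProd_apply_prod .of_discrete (measurableSet_singleton j),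
    setLIntegral_congr_fun (s := {v | historyWord v = b}) .of_discrete
      (g := fun _ => stepMeasure A W (prependWord x b) {j})
      (fun v (hv : historyWord v = b) => by rw [stepKernel, Kernel.ofFunOfCountable]; simp [hv]),
    setLIntegral_const, Measure.map_apply (by fun_prop) .of_discrete,
    ← wordCylinder_eq_preimage hb, mul_comm]

variable {A W x}

lemma stepMeasure_singleton (hW : ∀ y, 0 ≤ W y)
    (hKeane : ∀ y ∈ shiftSpace A, ∑ j, transitionWeight A W y j = 1) {y : ℕ → Fin N}
    (hy : y ∈ shiftSpace A) (j : Fin N) :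
    stepMeasure A W y {j} = ENNReal.ofReal (transitionWeight A W y j) := by
  have hsum : ∑ j, ENNReal.ofReal (transitionWeight A W y j) = 1 := by
    rw [← ENNReal.ofReal_sum_of_nonneg (f := transitionWeight A W y)
      fun j _ => mul_nonneg (Nat.cast_nonneg _) (hW _), hKeane y hy, ENNReal.ofReal_one]
  rw [stepMeasure, dif_pos hsum, PMF.toMeasure_apply_singleton _ _ (measurableSet_singleton j)]
  rfl

lemma walkMeasure_wordCylinder (hA01 : ∀ i j, A i j = 0 ∨ A i j = 1) (hW : ∀ y, 0 ≤ W y)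
    (hKeane : ∀ y ∈ shiftSpace A, ∑ j, transitionWeight A W y j = 1)
    (hx : x ∈ shiftSpace A) (a : List (Fin N)) :
    walkMeasure A W x (wordCylinder a) = ENNReal.ofReal (pathWeight A W x a) := by
  induction a using List.reverseRecOn with
  | nil => simp [wordCylinder, pathWeight]
  | append_singleton b j ih =>
    rw [walkMeasure_wordCylinder_append_singleton, ih, pathWeight_append_singleton,
      ENNReal.ofReal_mul (pathWeight_nonneg hW x b)]
    by_cases hb : pathWeight A W x b = 0
    · simp [hb]
    · rw [stepMeasure_singleton hW hKeane (prependWord_mem_shiftSpace hA01 hx hb)]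

lemma walkMeasure_compl_shiftSpace_transpose (hA01 : ∀ i j, A i j = 0 ∨ A i j = 1)
    (hW : ∀ y, 0 ≤ W y) (hKeane : ∀ y ∈ shiftSpace A, ∑ j, transitionWeight A W y j = 1)
    (hx : x ∈ shiftSpace A) :
    walkMeasure A W x (shiftSpace fun i j => A j i)ᶜ = 0 := by
  have hsub : (shiftSpace fun i j => A j i)ᶜ ⊆
      ⋃ (a : List (Fin N)) (_ : ¬ a.IsChain fun u v => A v u = 1), wordCylinder a := by
    intro w hw
    obtain ⟨n, hn⟩ := not_forall.1 hw
    refine Set.mem_iUnion₂.2 ⟨(List.range (n + 2)).map w, fun h => hn ?_,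
      mem_wordCylinder_iff.2 (by simp)⟩
    rw [List.range_succ, List.range_succ, List.map_append, List.map_append,
      List.append_assoc] at h
    simpa using h.right_of_append
  refine measure_mono_null hsub (measure_iUnion_null fun a => measure_iUnion_null fun ha => ?_)
  rw [walkMeasure_wordCylinder hA01 hW hKeane hx, ENNReal.ofReal_eq_zero]
  exact (not_imp_comm.1 (isChain_of_pathWeight_ne_zero hA01) ha).le

end Walk

theorem random_walk_measure_consistency_general
    {N : ℕ} (A : Fin N → Fin N → ℕ)
    (hA01 : ∀ i j, A i j = 0 ∨ A i j = 1)
    (Λ : Set (ℕ → Fin N)) (hΛ : Λ = {w | ∀ n, A (w n) (w (n + 1)) = 1})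
    (Λt : Set (ℕ → Fin N)) (hΛt : Λt = {w | ∀ n, A (w (n + 1)) (w n) = 1})
    (W : (ℕ → Fin N) → ℝ) (hWpos : ∀ y, 0 ≤ W y)
    -- the Keane condition for W on Λ_A
    (hKeane : ∀ y ∈ Λ, ∑ j, (A j (y 0) : ℝ) * W (prepend j y) = 1)
    (x : ℕ → Fin N) (hx : x ∈ Λ) :
    -- consistency of the cylinder values of P^W_x
    (∀ (a : List (Fin N)) (ha : a ≠ []),
      List.Chain' (fun u v => A v u = 1) a →
      PW A W x a = ∑ j, (A j (a.getLast ha) : ℝ) * PW A W x (a ++ [j]))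
    -- existence of an extending Borel measure on Λ_{A^t}
    ∧ (∃ ν : Measure (ℕ → Fin N), ν Λtᶜ = 0 ∧
        ∀ (a : List (Fin N)), a ≠ [] →
          List.Chain' (fun u v => A v u = 1) a →
          ν ({w | ∀ i : Fin a.length, w i = a.get i} ∩ Λt)
            = ENNReal.ofReal (PW A W x a)) := by
  subst hΛ hΛt
  have hnull := walkMeasure_compl_shiftSpace_transpose hA01 hWpos hKeane hx
  refine ⟨fun a ha hchain => PW_eq_sum_mul_PW_append_singleton hA01 hKeane hx ha hchain,
    walkMeasure A W x, hnull, fun a _ hchain => ?_⟩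
  change walkMeasure A W x (wordCylinder a ∩ shiftSpace fun i j => A j i) = _
  rw [measure_inter_conull hnull, PW_eq_pathWeight x hchain]
  exact walkMeasure_wordCylinder hA01 hWpos hKeane hx a

/-- If `W : Λ_A → ℝ≥0` satisfies the Keane condition, then for
`x ∈ Λ_A` the assignment `P^W_x(Λ_{k,A^t}(a)) = A_{a_1 x_1} W(σ_{a_1}(x)) ⋯
W(σ_{a_k}⋯σ_{a_1}(x))` on cylinders of `Λ_{A^t}` (for words `a` with `a^t` admissible
for `A`) is consistently defined:
`P^W_x(Λ_{k,A^t}(a)) = Σ_j (A^t)_{a_k j} P^W_x(Λ_{k+1,A^t}(aj))`,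
and hence extends to a Borel measure on `Λ_{A^t}`. -/
theorem random_walk_measure_consistency
    {N : ℕ} (hN : 0 < N) (A : Fin N → Fin N → ℕ)
    (hA01 : ∀ i j, A i j = 0 ∨ A i j = 1)
    (Λ : Set (ℕ → Fin N)) (hΛ : Λ = {w | ∀ n, A (w n) (w (n + 1)) = 1})
    (Λt : Set (ℕ → Fin N)) (hΛt : Λt = {w | ∀ n, A (w (n + 1)) (w n) = 1})
    (W : (ℕ → Fin N) → ℝ) (hWpos : ∀ y, 0 ≤ W y)
    -- the Keane condition for W on Λ_A
    (hKeane : ∀ y ∈ Λ, ∑ j, (A j (y 0) : ℝ) * W (prepend j y) = 1)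
    (x : ℕ → Fin N) (hx : x ∈ Λ) :
    -- consistency of the cylinder values of P^W_x
    (∀ (a : List (Fin N)) (ha : a ≠ []),
      List.Chain' (fun u v => A v u = 1) a →
      PW A W x a = ∑ j, (A j (a.getLast ha) : ℝ) * PW A W x (a ++ [j]))
    -- existence of an extending Borel measure on Λ_{A^t}
    ∧ (∃ ν : Measure (ℕ → Fin N), ν Λtᶜ = 0 ∧
        ∀ (a : List (Fin N)), a ≠ [] →
          List.Chain' (fun u v => A v u = 1) a →
          ν ({w | ∀ i : Fin a.length, w i = a.get i} ∩ Λt)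
            = ENNReal.ofReal (PW A W x a)) :=
  random_walk_measure_consistency_general A hA01 Λ hΛ Λt hΛt W hWpos hKeane x hx
end
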